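/- arXiv:2308.05099 — 4 statements merged into one kernel-verified Lean document; each statement's English description precedes it below -/
import Mathlib

section
/- If E and E' are transitive and cotransitive subsets of {(i,j) : 1 ≤ i < j ≤ n}, then the set M = E ∩ E' ∩ {(i,j) : for all i < l < j, (i,l) ∈ E ∩ E' or (l,j) ∈ E ∩ E'} is transitive. -/
/-- `E` is transitive: `(i,j) ∈ E` and `(j,k) ∈ E` imply `(i,k) ∈ E`. -/
def IsTransSet (E : Set (ℕ × ℕ)) : Prop :=
  ∀ i j k : ℕ, (i, j) ∈ E → (j, k) ∈ E → (i, k) ∈ E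

/-- `E` is cotransitive: its complement within `{(i,j) : 1 ≤ i < j ≤ n}` is transitive. -/
def IsCotransSet (n : ℕ) (E : Set (ℕ × ℕ)) : Prop :=
  ∀ i j k : ℕ, 1 ≤ i → i < j → j < k → k ≤ n → (i, j) ∉ E → (j, k) ∉ E → (i, k) ∉ E

/-- The meet candidate `M(E,E') = E ∩ E' ∩ {(i,j) : ∀ i<l<j, (i,l) ∈ E∩E' ∨ (l,j) ∈ E∩E'}`. -/
def meetSet (E E' : Set (ℕ × ℕ)) : Set (ℕ × ℕ) :=
  {p | p ∈ E ∧ p ∈ E' ∧ ∀ l : ℕ, p.1 < l → l < p.2 →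
    ((p.1, l) ∈ E ∧ (p.1, l) ∈ E') ∨ ((l, p.2) ∈ E ∧ (l, p.2) ∈ E')}

/-- If `E` and `E'` are transitive and cotransitive, then `M(E,E')` is transitive. -/
theorem meetSet_trans (n : ℕ) (E E' : Set (ℕ × ℕ))
    (hE : E ⊆ {p | 1 ≤ p.1 ∧ p.1 < p.2 ∧ p.2 ≤ n})
    (hE' : E' ⊆ {p | 1 ≤ p.1 ∧ p.1 < p.2 ∧ p.2 ≤ n})
    (htE : IsTransSet E) (hcE : IsCotransSet n E)
    (htE' : IsTransSet E') (hcE' : IsCotransSet n E') :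
    IsTransSet (meetSet E E') := by
  rintro i j k ⟨hijE, hijE', hij⟩ ⟨hjkE, hjkE', hjk⟩
  refine ⟨htE i j k hijE hjkE, htE' i j k hijE' hjkE', ?_⟩
  intro l hil hlk
  rcases lt_trichotomy l j with h | h | h
  · rcases hij l hil h with hc | hc
    · exact Or.inl hc
    · exact Or.inr ⟨htE l j k hc.1 hjkE, htE' l j k hc.2 hjkE'⟩
  · subst h; exact Or.inl ⟨hijE, hijE'⟩
  · rcases hjk l h hlk with hc | hc
    · exact Or.inl ⟨htE i j l hijE hc.1, htE' i j l hijE' hc.2⟩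
    · exact Or.inr hc
end

section
/- The poset of transitive and cotransitive subsets of {(i,j) : 1 ≤ i < j ≤ n}, ordered by inclusion, is a lattice. -/
/-- The box `{(i,j) : 1 ≤ i < j ≤ n}`. -/
def box (n : ℕ) : Set (ℕ × ℕ) := {p | 1 ≤ p.1 ∧ p.1 < p.2 ∧ p.2 ≤ n}

lemma join_exists (n : ℕ) (E E' : Set (ℕ × ℕ))
    (hEP : E ⊆ box n) (hEc : IsCotransSet n E)
    (hE'P : E' ⊆ box n) (hE'c : IsCotransSet n E') :
    ∃ J : Set (ℕ × ℕ), J ⊆ box n ∧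
      IsTransSet J ∧ IsCotransSet n J ∧ E ⊆ J ∧ E' ⊆ J ∧
      ∀ S : Set (ℕ × ℕ), S ⊆ box n →
        IsTransSet S → IsCotransSet n S → E ⊆ S → E' ⊆ S → J ⊆ S := by
  classical
  set r : ℕ → ℕ → Prop := fun a b => (a, b) ∈ E ∪ E' with hr
  have hrP : ∀ a b, r a b → 1 ≤ a ∧ a < b ∧ b ≤ n := by
    intro a b hab
    rcases hab with h | h
    · exact hEP h
    · exact hE'P h
  have hbox : ∀ a b, Relation.TransGen r a b → 1 ≤ a ∧ a < b ∧ b ≤ n := by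
    intro a b h
    induction h with
    | single h => exact hrP _ _ h
    | tail hab hbc ih =>
      obtain ⟨h1, h2, _⟩ := ih
      obtain ⟨_, h4, h5⟩ := hrP _ _ hbc
      exact ⟨h1, lt_trans h2 h4, h5⟩
  have hstep : ∀ i j k, i < j → j < k → r i k → r i j ∨ r j k := by
    intro i j k hij hjk hik
    by_contra hcontra
    push_neg at hcontra
    obtain ⟨h1, h2⟩ := hcontra
    have h1E : (i, j) ∉ E := fun h => h1 (Or.inl h)
    have h1E' : (i, j) ∉ E' := fun h => h1 (Or.inr h)
    have h2E : (j, k) ∉ E := fun h => h2 (Or.inl h)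
    have h2E' : (j, k) ∉ E' := fun h => h2 (Or.inr h)
    rcases hik with h | h
    · obtain ⟨hb1, _, hb3⟩ := hEP h
      exact hEc i j k hb1 hij hjk hb3 h1E h2E h
    · obtain ⟨hb1, _, hb3⟩ := hE'P h
      exact hE'c i j k hb1 hij hjk hb3 h1E' h2E' h
  have hsplit : ∀ i k, Relation.TransGen r i k → ∀ j, i < j → j < k →
      Relation.TransGen r i j ∨ Relation.TransGen r j k := by
    intro i k h
    induction h with
    | single h =>
      intro j hij hjk
      rcases hstep _ _ _ hij hjk h with h' | h'
      · exact Or.inl (Relation.TransGen.single h')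
      · exact Or.inr (Relation.TransGen.single h')
    | @tail b c hib hbc ih =>
      intro j hij hjc
      rcases lt_trichotomy j b with hjb | hjb | hjb
      · rcases ih j hij hjb with h' | h'
        · exact Or.inl h'
        · exact Or.inr (h'.tail hbc)
      · subst hjb
        exact Or.inl hib
      · rcases hstep _ _ _ hjb hjc hbc with h' | h'
        · exact Or.inl (hib.tail h')
        · exact Or.inr (Relation.TransGen.single h')
  refine ⟨{p | Relation.TransGen r p.1 p.2}, ?_, ?_, ?_, ?_, ?_, ?_⟩
  · intro p hp; exact hbox _ _ hp
  · intro i j k hij hjk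
    exact Relation.TransGen.trans hij hjk
  · intro i j k _ hij hjk _ h1 h2
    intro hik
    rcases hsplit i k hik j hij hjk with h | h
    · exact h1 h
    · exact h2 h
  · intro p hp; exact Relation.TransGen.single (Or.inl hp)
  · intro p hp; exact Relation.TransGen.single (Or.inr hp)
  · intro S _ hSt _ hES hE'S
    intro p hp
    have : ∀ a b, Relation.TransGen r a b → (a, b) ∈ S := by
      intro a b h
      induction h with
      | single h =>
        rcases h with h | h
        · exact hES h
        · exact hE'S h
      | @tail b c _ hbc ih =>
        have hbcS : (b, c) ∈ S := by
          rcases hbc with h | h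
          · exact hES h
          · exact hE'S h
        exact hSt _ _ _ ih hbcS
    exact this p.1 p.2 hp

lemma compl_trans {n : ℕ} {E : Set (ℕ × ℕ)} (hEP : E ⊆ box n) (hEc : IsCotransSet n E) :
    IsTransSet (box n \ E) := by
  intro i j k hij hjk
  obtain ⟨⟨h1, h2, _⟩, h4⟩ := hij
  obtain ⟨⟨_, h6, h7⟩, h8⟩ := hjk
  exact ⟨⟨h1, lt_trans h2 h6, h7⟩, hEc i j k h1 h2 h6 h7 h4 h8⟩

lemma compl_cotrans {n : ℕ} {E : Set (ℕ × ℕ)} (hEt : IsTransSet E) :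
    IsCotransSet n (box n \ E) := by
  intro i j k h1 h2 h3 h4 hij hjk hik
  have hijE : (i, j) ∈ E := by
    by_contra h
    exact hij ⟨⟨h1, h2, le_trans (le_of_lt h3) h4⟩, h⟩
  have hjkE : (j, k) ∈ E := by
    by_contra h
    exact hjk ⟨⟨le_trans h1 (le_of_lt h2), h3, h4⟩, h⟩
  exact hik.2 (hEt i j k hijE hjkE)

lemma box_compl_compl {n : ℕ} {E : Set (ℕ × ℕ)} (hEP : E ⊆ box n) :
    box n \ (box n \ E) = E := by
  ext p
  constructor
  · rintro ⟨hp, hnp⟩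
    by_contra h
    exact hnp ⟨hp, h⟩
  · intro h
    exact ⟨hEP h, fun h' => h'.2 h⟩

/-- The poset of transitive and cotransitive subsets of
`{(i,j) : 1 ≤ i < j ≤ n}`, ordered by inclusion, is a lattice. -/
theorem trans_cotrans_lattice (n : ℕ) :
    ∀ E E' : Set (ℕ × ℕ),
      E ⊆ {p | 1 ≤ p.1 ∧ p.1 < p.2 ∧ p.2 ≤ n} → IsTransSet E → IsCotransSet n E →
      E' ⊆ {p | 1 ≤ p.1 ∧ p.1 < p.2 ∧ p.2 ≤ n} → IsTransSet E' → IsCotransSet n E' →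
      (∃ M : Set (ℕ × ℕ), M ⊆ {p | 1 ≤ p.1 ∧ p.1 < p.2 ∧ p.2 ≤ n} ∧
        IsTransSet M ∧ IsCotransSet n M ∧ M ⊆ E ∧ M ⊆ E' ∧
        ∀ S : Set (ℕ × ℕ), S ⊆ {p | 1 ≤ p.1 ∧ p.1 < p.2 ∧ p.2 ≤ n} →
          IsTransSet S → IsCotransSet n S → S ⊆ E → S ⊆ E' → S ⊆ M) ∧
      (∃ J : Set (ℕ × ℕ), J ⊆ {p | 1 ≤ p.1 ∧ p.1 < p.2 ∧ p.2 ≤ n} ∧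
        IsTransSet J ∧ IsCotransSet n J ∧ E ⊆ J ∧ E' ⊆ J ∧
        ∀ S : Set (ℕ × ℕ), S ⊆ {p | 1 ≤ p.1 ∧ p.1 < p.2 ∧ p.2 ≤ n} →
          IsTransSet S → IsCotransSet n S → E ⊆ S → E' ⊆ S → J ⊆ S) := by
  intro E E' hEP hEt hEc hE'P hE't hE'c
  have hEP' : E ⊆ box n := hEP
  have hE'P' : E' ⊆ box n := hE'P
  constructor
  · -- Meet, by duality
    obtain ⟨J, hJP, hJt, hJc, hFJ, hF'J, hJmin⟩ :=
      join_exists n (box n \ E) (box n \ E') Set.diff_subset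
        (compl_cotrans hEt) Set.diff_subset (compl_cotrans hE't)
    refine ⟨box n \ J, Set.diff_subset, compl_trans hJP hJc, compl_cotrans hJt, ?_, ?_, ?_⟩
    · -- box \ J ⊆ E
      intro p hp
      have : p ∈ box n \ (box n \ E) := ⟨hp.1, fun h => hp.2 (hFJ h)⟩
      rwa [box_compl_compl hEP'] at this
    · intro p hp
      have : p ∈ box n \ (box n \ E') := ⟨hp.1, fun h => hp.2 (hF'J h)⟩
      rwa [box_compl_compl hE'P'] at this
    · intro S hSP hSt hSc hSE hSE'
      have h1 : box n \ E ⊆ box n \ S := fun p hp => ⟨hp.1, fun h => hp.2 (hSE h)⟩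
      have h2 : box n \ E' ⊆ box n \ S := fun p hp => ⟨hp.1, fun h => hp.2 (hSE' h)⟩
      have hJS : J ⊆ box n \ S :=
        hJmin (box n \ S) Set.diff_subset (compl_trans hSP hSc) (compl_cotrans hSt) h1 h2
      intro p hp
      exact ⟨hSP hp, fun hJ => (hJS hJ).2 hp⟩
  · obtain ⟨J, hJP, hJt, hJc, hEJ, hE'J, hJmin⟩ :=
      join_exists n E E' hEP' hEc hE'P' hE'c
    exact ⟨J, hJP, hJt, hJc, hEJ, hE'J, hJmin⟩
end

section
/- The number of bracket sets on [n] equals the n-th Catalan number. -/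
/-- A bracket set on `[n]` (finite version): a finite set of pairs `(i,j)`
with `1 ≤ i < j ≤ n` whose components are empty or intervals `{i+1,…,i+l}`,
and such that `j ∈ B_i` implies `B_j ⊆ B_i`. -/
def IsBracketSetF (n : ℕ) (B : Finset (ℕ × ℕ)) : Prop :=
  (∀ p ∈ B, 1 ≤ p.1 ∧ p.1 < p.2 ∧ p.2 ≤ n) ∧
  (∀ i l j : ℕ, (i, j) ∈ B → i < l → l < j → (i, l) ∈ B) ∧
  (∀ i j k : ℕ, (i, j) ∈ B → (j, k) ∈ B → (i, k) ∈ B)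

namespace BracketAux
open Finset
attribute [local instance] Classical.propDecidable

def IsBS (a m : ℕ) (B : Finset (ℕ × ℕ)) : Prop :=
  (∀ p ∈ B, a + 1 ≤ p.1 ∧ p.1 < p.2 ∧ p.2 ≤ a + m) ∧
  (∀ i l j : ℕ, (i, j) ∈ B → i < l → l < j → (i, l) ∈ B) ∧
  (∀ i j k : ℕ, (i, j) ∈ B → (j, k) ∈ B → (i, k) ∈ B)

noncomputable def bs (a m : ℕ) : Finset (Finset (ℕ × ℕ)) :=
  ((Finset.Icc (a+1) (a+m) ×ˢ Finset.Icc (a+1) (a+m)).powerset).filter (IsBS a m)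

lemma mem_bs {a m : ℕ} {B : Finset (ℕ × ℕ)} : B ∈ bs a m ↔ IsBS a m B := by
  simp only [bs, mem_filter, mem_powerset, and_iff_right_iff_imp]
  intro h p hp
  obtain ⟨h1, h2, h3⟩ := h.1 p hp
  simp only [mem_product, mem_Icc]
  omega

lemma bs_zero (a : ℕ) : bs a 0 = {∅} := by
  ext B
  simp only [mem_bs, mem_singleton]
  constructor
  · intro h
    ext p
    simp only [Finset.notMem_empty, iff_false]
    intro hp
    have := h.1 p hp
    omega
  · rintro rfl
    refine ⟨fun p hp => by simp at hp, fun i l j h => by simp at h, fun i j k h => by simp at h⟩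

lemma up_mem_bs {a m : ℕ} {B : Finset (ℕ × ℕ)} (h : IsBS 0 m B) :
    IsBS a m (B.image (fun p => (p.1 + a, p.2 + a))) := by
  refine ⟨?_, ?_, ?_⟩
  · intro p hp
    simp only [mem_image] at hp
    obtain ⟨q, hq, rfl⟩ := hp
    have := h.1 q hq
    simp only
    omega
  · intro i l j hij hil hlj
    simp only [mem_image, Prod.ext_iff] at hij ⊢
    obtain ⟨q, hq, hq1, hq2⟩ := hij
    have hb := h.1 q hq
    refine ⟨(q.1, l - a), h.2.1 q.1 (l - a) q.2 (by simpa using hq) (by omega) (by omega), by omega, by omega⟩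
  · intro i j k hij hjk
    simp only [mem_image, Prod.ext_iff] at hij hjk ⊢
    obtain ⟨q, hq, hq1, hq2⟩ := hij
    obtain ⟨r, hr, hr1, hr2⟩ := hjk
    have hb := h.1 q hq
    have hb' := h.1 r hr
    have : q.2 = r.1 := by omega
    refine ⟨(q.1, r.2), h.2.2 q.1 q.2 r.2 (by simpa using hq) (by rw [this]; simpa using hr), by omega, by omega⟩

lemma down_mem_bs {a m : ℕ} {B : Finset (ℕ × ℕ)} (h : IsBS a m B) :
    IsBS 0 m (B.image (fun p => (p.1 - a, p.2 - a))) := by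
  have key : ∀ x y : ℕ, (x, y) ∈ B.image (fun p => (p.1 - a, p.2 - a)) ↔ (x + a, y + a) ∈ B := by
    intro x y
    simp only [mem_image, Prod.ext_iff]
    constructor
    · rintro ⟨q, hq, h1, h2⟩
      have hb := h.1 q hq
      have hx : x + a = q.1 := by omega
      have hy : y + a = q.2 := by omega
      rw [hx, hy]
      simpa using hq
    · intro hm
      exact ⟨(x + a, y + a), hm, by omega, by omega⟩
  refine ⟨?_, ?_, ?_⟩
  · intro p hp
    obtain ⟨x, y⟩ := p
    rw [key] at hp
    have := h.1 _ hp
    simp only at this ⊢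
    omega
  · intro i l j hij hil hlj
    rw [key] at hij ⊢
    exact h.2.1 (i + a) (l + a) (j + a) hij (by omega) (by omega)
  · intro i j k hij hjk
    rw [key] at hij hjk ⊢
    exact h.2.2 (i + a) (j + a) (k + a) hij hjk

lemma card_bs_shift (a m : ℕ) : (bs a m).card = (bs 0 m).card := by
  refine Finset.card_bij' (fun B _ => B.image (fun p => (p.1 - a, p.2 - a)))
    (fun B _ => B.image (fun p => (p.1 + a, p.2 + a))) ?_ ?_ ?_ ?_
  · intro B hB
    exact mem_bs.2 (down_mem_bs (mem_bs.1 hB))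
  · intro B hB
    exact mem_bs.2 (up_mem_bs (mem_bs.1 hB))
  · intro B hB
    have h := mem_bs.1 hB
    rw [Finset.image_image]
    rw [show ((fun p : ℕ × ℕ => (p.1 + a, p.2 + a)) ∘ fun p : ℕ × ℕ => (p.1 - a, p.2 - a)) =
        fun p : ℕ × ℕ => (p.1 - a + a, p.2 - a + a) from rfl]
    ext p
    simp only [mem_image]
    constructor
    · rintro ⟨q, hq, rfl⟩
      have := h.1 q hq
      have hq1 : q.1 - a + a = q.1 := by omega
      have hq2 : q.2 - a + a = q.2 := by omega
      simpa [hq1, hq2] using hq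
    · intro hp
      have := h.1 p hp
      have h1 : p.1 - a + a = p.1 := by omega
      have h2 : p.2 - a + a = p.2 := by omega
      exact ⟨p, hp, by simp [h1, h2]⟩
  · intro B hB
    rw [Finset.image_image]
    rw [show ((fun p : ℕ × ℕ => (p.1 - a, p.2 - a)) ∘ fun p : ℕ × ℕ => (p.1 + a, p.2 + a)) =
        fun p : ℕ × ℕ => (p.1 + a - a, p.2 + a - a) from rfl]
    simp

end BracketAux
namespace BracketAux
open Finset

noncomputable def kk (a : ℕ) (B : Finset (ℕ × ℕ)) : ℕ :=
  (B.filter (fun p => p.1 = a + 1)).sup Prod.snd - (a + 1)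

lemma kk_le {a m : ℕ} {B : Finset (ℕ × ℕ)} (h : IsBS a (m + 1) B) : kk a B ≤ m := by
  have hsup : (B.filter (fun p => p.1 = a + 1)).sup Prod.snd ≤ a + m + 1 :=
    Finset.sup_le (fun p hp => by have := (h.1 p (mem_filter.1 hp).1).2.2; omega)
  unfold kk; omega

lemma memA {a m : ℕ} {B : Finset (ℕ × ℕ)} (h : IsBS a (m + 1) B) (j : ℕ) :
    (a + 1, j) ∈ B ↔ a + 2 ≤ j ∧ j ≤ a + 1 + kk a B := by
  have hkk : kk a B = (B.filter (fun p => p.1 = a + 1)).sup Prod.snd - (a + 1) := rfl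
  constructor
  · intro hj
    have h1 := h.1 _ hj
    simp only at h1
    have hmemF : (a + 1, j) ∈ B.filter (fun p => p.1 = a + 1) := mem_filter.2 ⟨hj, rfl⟩
    have hle : j ≤ (B.filter (fun p => p.1 = a + 1)).sup Prod.snd :=
      Finset.le_sup (f := Prod.snd) hmemF
    omega
  · rintro ⟨h2, h3⟩
    have hsup : a + 2 ≤ (B.filter (fun p => p.1 = a + 1)).sup Prod.snd := by omega
    have hne : (B.filter (fun p => p.1 = a + 1)).Nonempty := by
      rcases (B.filter (fun p => p.1 = a + 1)).eq_empty_or_nonempty with he | hne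
      · rw [he] at hsup; simp at hsup
      · exact hne
    obtain ⟨p, hpF, hps⟩ := Finset.exists_mem_eq_sup _ hne Prod.snd
    obtain ⟨hpB, hp1⟩ := mem_filter.1 hpF

    have hpeq : (a + 1, (B.filter (fun p => p.1 = a + 1)).sup Prod.snd) ∈ B := by
      have hq : p = (a + 1, (B.filter (fun p => p.1 = a + 1)).sup Prod.snd) := by
        rw [Prod.ext_iff]; exact ⟨hp1, hps.symm⟩
      rwa [hq] at hpB
    rcases eq_or_lt_of_le h3 with he | hlt
    · have : j = (B.filter (fun p => p.1 = a + 1)).sup Prod.snd := by omega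
      rw [this]; exact hpeq
    · exact h.2.1 (a + 1) j _ hpeq (by omega) (by omega)

lemma no_cross {a m : ℕ} {B : Finset (ℕ × ℕ)} (h : IsBS a (m + 1) B) {i j : ℕ}
    (hij : (i, j) ∈ B) (hi : i ≤ a + 1 + kk a B) : j ≤ a + 1 + kk a B := by
  have h1 := h.1 _ hij
  simp only at h1
  rcases eq_or_lt_of_le h1.1 with he | hlt
  · exact ((memA h j).1 (he ▸ hij)).2
  · have hm : (a + 1, i) ∈ B := (memA h i).2 ⟨by omega, hi⟩
    exact ((memA h j).1 (h.2.2 (a + 1) i j hm hij)).2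

end BracketAux
namespace BracketAux
open Finset
attribute [local instance] Classical.propDecidable

lemma B1_mem {a m : ℕ} {B : Finset (ℕ × ℕ)} (h : IsBS a (m + 1) B) :
    IsBS (a + 1) (kk a B) (B.filter (fun p => a + 2 ≤ p.1 ∧ p.1 ≤ a + 1 + kk a B)) := by
  refine ⟨?_, ?_, ?_⟩
  · intro p hp
    obtain ⟨hpB, hp1, hp2⟩ := mem_filter.1 hp
    have hb := h.1 p hpB
    have hc : p.2 ≤ a + 1 + kk a B := by
      obtain ⟨x, y⟩ := p
      exact no_cross h hpB hp2
    omega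
  · intro i l j hij hil hlj
    obtain ⟨hB, hc1, hc2⟩ := mem_filter.1 hij
    exact mem_filter.2 ⟨h.2.1 i l j hB hil hlj, hc1, hc2⟩
  · intro i j k hij hjk
    obtain ⟨hB, hc1, hc2⟩ := mem_filter.1 hij
    obtain ⟨hB', _, _⟩ := mem_filter.1 hjk
    exact mem_filter.2 ⟨h.2.2 i j k hB hB', hc1, hc2⟩

lemma B2_mem {a m : ℕ} {B : Finset (ℕ × ℕ)} (h : IsBS a (m + 1) B) :
    IsBS (a + 1 + kk a B) (m - kk a B) (B.filter (fun p => a + 2 + kk a B ≤ p.1)) := by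
  have hk := kk_le h
  refine ⟨?_, ?_, ?_⟩
  · intro p hp
    obtain ⟨hpB, hp1⟩ := mem_filter.1 hp
    have hb := h.1 p hpB
    omega
  · intro i l j hij hil hlj
    obtain ⟨hB, hc1⟩ := mem_filter.1 hij
    exact mem_filter.2 ⟨h.2.1 i l j hB hil hlj, hc1⟩
  · intro i j k hij hjk
    obtain ⟨hB, hc1⟩ := mem_filter.1 hij
    obtain ⟨hB', _⟩ := mem_filter.1 hjk
    exact mem_filter.2 ⟨h.2.2 i j k hB hB', hc1⟩

lemma mem_glue {a k : ℕ} {B1 B2 : Finset (ℕ × ℕ)} (x y : ℕ) :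
    (x, y) ∈ ((Icc (a + 2) (a + 1 + k)).image (fun t => (a + 1, t))) ∪ B1 ∪ B2 ↔
      (x = a + 1 ∧ a + 2 ≤ y ∧ y ≤ a + 1 + k) ∨ (x, y) ∈ B1 ∨ (x, y) ∈ B2 := by
  simp only [mem_union, mem_image, mem_Icc, Prod.mk.injEq, or_assoc]
  constructor
  · rintro (⟨t, ⟨ht1, ht2⟩, he1, he2⟩ | h | h)
    · exact Or.inl ⟨he1.symm, by omega, by omega⟩
    · exact Or.inr (Or.inl h)
    · exact Or.inr (Or.inr h)
  · rintro (⟨rfl, h1, h2⟩ | h | h)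
    · exact Or.inl ⟨y, ⟨h1, h2⟩, rfl, rfl⟩
    · exact Or.inr (Or.inl h)
    · exact Or.inr (Or.inr h)

lemma glue_mem {a m k : ℕ} (hk : k ≤ m) {B1 B2 : Finset (ℕ × ℕ)}
    (h1 : IsBS (a + 1) k B1) (h2 : IsBS (a + 1 + k) (m - k) B2) :
    IsBS a (m + 1) (((Icc (a + 2) (a + 1 + k)).image (fun t => (a + 1, t))) ∪ B1 ∪ B2) := by
  refine ⟨?_, ?_, ?_⟩
  · intro p hp
    obtain ⟨x, y⟩ := p
    rw [mem_glue] at hp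
    rcases hp with ⟨rfl, hy1, hy2⟩ | hm | hm
    · simp only; omega
    · have hb := h1.1 _ hm; simp only at hb ⊢; omega
    · have hb := h2.1 _ hm; simp only at hb ⊢; omega
  · intro i l j hij hil hlj
    rw [mem_glue] at hij ⊢
    rcases hij with ⟨rfl, hy1, hy2⟩ | hm | hm
    · exact Or.inl ⟨rfl, by omega, by omega⟩
    · exact Or.inr (Or.inl (h1.2.1 i l j hm hil hlj))
    · exact Or.inr (Or.inr (h2.2.1 i l j hm hil hlj))
  · intro i j k' hij hjk
    rw [mem_glue] at hij hjk ⊢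
    rcases hij with ⟨rfl, hy1, hy2⟩ | hm | hm
    · rcases hjk with ⟨he, _, _⟩ | hm' | hm'
      · exfalso; omega
      · have hb := h1.1 _ hm'; simp only at hb
        exact Or.inl ⟨rfl, by omega, by omega⟩
      · have hb := h2.1 _ hm'; simp only at hb
        exfalso; omega
    · have hb := h1.1 _ hm; simp only at hb
      rcases hjk with ⟨he, _, _⟩ | hm' | hm'
      · exfalso; omega
      · exact Or.inr (Or.inl (h1.2.2 i j k' hm hm'))
      · have hb' := h2.1 _ hm'; simp only at hb'
        exfalso; omega
    · have hb := h2.1 _ hm; simp only at hb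
      rcases hjk with ⟨he, _, _⟩ | hm' | hm'
      · exfalso; omega
      · have hb' := h1.1 _ hm'; simp only at hb'
        exfalso; omega
      · exact Or.inr (Or.inr (h2.2.2 i j k' hm hm'))

end BracketAux
namespace BracketAux
open Finset
attribute [local instance] Classical.propDecidable

lemma glue_forward {a m : ℕ} {B : Finset (ℕ × ℕ)} (h : IsBS a (m + 1) B) :
    ((Icc (a + 2) (a + 1 + kk a B)).image (fun t => (a + 1, t))) ∪
      (B.filter (fun p => a + 2 ≤ p.1 ∧ p.1 ≤ a + 1 + kk a B)) ∪
      (B.filter (fun p => a + 2 + kk a B ≤ p.1)) = B := by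
  ext p
  obtain ⟨x, y⟩ := p
  rw [mem_glue]
  constructor
  · rintro (⟨rfl, hy1, hy2⟩ | hm | hm)
    · exact (memA h y).2 ⟨hy1, hy2⟩
    · exact (mem_filter.1 hm).1
    · exact (mem_filter.1 hm).1
  · intro hxy
    have hb := h.1 _ hxy
    simp only at hb
    by_cases hx : x = a + 1
    · subst hx
      exact Or.inl ⟨rfl, ((memA h y).1 hxy).1, ((memA h y).1 hxy).2⟩
    · by_cases hx2 : x ≤ a + 1 + kk a B
      · exact Or.inr (Or.inl (mem_filter.2 ⟨hxy, by omega, hx2⟩))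
      · exact Or.inr (Or.inr (mem_filter.2 ⟨hxy, by omega⟩))

lemma kk_glue {a k : ℕ} {B1 B2 : Finset (ℕ × ℕ)}
    (h1 : IsBS (a + 1) k B1) (h2 : IsBS (a + 1 + k) (m' - k) B2) :
    kk a (((Icc (a + 2) (a + 1 + k)).image (fun t => (a + 1, t))) ∪ B1 ∪ B2) = k := by
  set G := ((Icc (a + 2) (a + 1 + k)).image (fun t => (a + 1, t))) ∪ B1 ∪ B2 with hG
  have hfil : G.filter (fun p => p.1 = a + 1) =
      (Icc (a + 2) (a + 1 + k)).image (fun t => (a + 1, t)) := by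
    ext p
    obtain ⟨x, y⟩ := p
    rw [mem_filter, hG, mem_glue]
    simp only [mem_image, mem_Icc, Prod.mk.injEq]
    constructor
    · rintro ⟨⟨rfl, hy1, hy2⟩ | hm | hm, he⟩
      · exact ⟨y, ⟨hy1, hy2⟩, rfl, rfl⟩
      · have hb := h1.1 _ hm; simp only at hb he; omega
      · have hb := h2.1 _ hm; simp only at hb he; omega
    · rintro ⟨t, ⟨ht1, ht2⟩, rfl, rfl⟩
      exact ⟨Or.inl ⟨rfl, ht1, ht2⟩, rfl⟩
  unfold kk
  rw [hfil, Finset.sup_image]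
  rcases Nat.eq_zero_or_pos k with rfl | hk
  · have : Icc (a + 2) (a + 1) = ∅ := by rw [Icc_eq_empty]; omega
    rw [this]
    simp
  · have hsup : (Icc (a + 2) (a + 1 + k)).sup ((fun p : ℕ × ℕ => p.2) ∘ (fun t => (a + 1, t))) = a + 1 + k := by
      apply le_antisymm
      · exact Finset.sup_le (fun t ht => by simp only [Function.comp]; exact (mem_Icc.1 ht).2)
      · exact Finset.le_sup (f := (fun p : ℕ × ℕ => p.2) ∘ (fun t => (a + 1, t)))
          (mem_Icc.2 ⟨by omega, le_refl _⟩)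
    rw [hsup]
    omega

lemma filter1_glue {a m k : ℕ} (hk : k ≤ m) {B1 B2 : Finset (ℕ × ℕ)}
    (h1 : IsBS (a + 1) k B1) (h2 : IsBS (a + 1 + k) (m - k) B2) :
    (((Icc (a + 2) (a + 1 + k)).image (fun t => (a + 1, t))) ∪ B1 ∪ B2).filter
      (fun p => a + 2 ≤ p.1 ∧ p.1 ≤ a + 1 + k) = B1 := by
  ext p
  obtain ⟨x, y⟩ := p
  rw [mem_filter, mem_glue]
  constructor
  · rintro ⟨⟨rfl, hy1, hy2⟩ | hm | hm, hc1, hc2⟩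
    · simp only at hc1; omega
    · exact hm
    · have hb := h2.1 _ hm; simp only at hb hc1 hc2; omega
  · intro hm
    have hb := h1.1 _ hm; simp only at hb
    exact ⟨Or.inr (Or.inl hm), by omega, by omega⟩

lemma filter2_glue {a m k : ℕ} (hk : k ≤ m) {B1 B2 : Finset (ℕ × ℕ)}
    (h1 : IsBS (a + 1) k B1) (h2 : IsBS (a + 1 + k) (m - k) B2) :
    (((Icc (a + 2) (a + 1 + k)).image (fun t => (a + 1, t))) ∪ B1 ∪ B2).filter
      (fun p => a + 2 + k ≤ p.1) = B2 := by
  ext p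
  obtain ⟨x, y⟩ := p
  rw [mem_filter, mem_glue]
  constructor
  · rintro ⟨⟨rfl, hy1, hy2⟩ | hm | hm, hc1⟩
    · simp only at hc1; omega
    · have hb := h1.1 _ hm; simp only at hb hc1; omega
    · exact hm
  · intro hm
    have hb := h2.1 _ hm; simp only at hb
    exact ⟨Or.inr (Or.inr hm), by omega⟩

lemma card_bs_succ (a m : ℕ) :
    (bs a (m + 1)).card =
      ∑ k ∈ Finset.range (m + 1), (bs (a + 1) k).card * (bs (a + 1 + k) (m - k)).card := by
  have key : (bs a (m + 1)).card =
      ((Finset.range (m + 1)).sigma fun k => bs (a + 1) k ×ˢ bs (a + 1 + k) (m - k)).card := by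
    refine Finset.card_bij'
      (fun B _ => ⟨kk a B, (B.filter (fun p => a + 2 ≤ p.1 ∧ p.1 ≤ a + 1 + kk a B),
          B.filter (fun p => a + 2 + kk a B ≤ p.1))⟩)
      (fun x _ => ((Icc (a + 2) (a + 1 + x.1)).image (fun t => (a + 1, t))) ∪ x.2.1 ∪ x.2.2)
      ?_ ?_ ?_ ?_
    · intro B hB
      have h := mem_bs.1 hB
      rw [Finset.mem_sigma]
      dsimp only
      exact ⟨Finset.mem_range.2 (by have := kk_le h; omega),
        Finset.mem_product.2 ⟨mem_bs.2 (B1_mem h), mem_bs.2 (B2_mem h)⟩⟩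
    · rintro ⟨k, B1, B2⟩ hx
      rw [Finset.mem_sigma, Finset.mem_product] at hx
      dsimp only at hx
      obtain ⟨hk, h1, h2⟩ := hx
      rw [Finset.mem_range] at hk
      exact mem_bs.2 (glue_mem (by omega : k ≤ m) (mem_bs.1 h1) (mem_bs.1 h2))
    · intro B hB
      exact glue_forward (mem_bs.1 hB)
    · rintro ⟨k, B1, B2⟩ hx
      rw [Finset.mem_sigma, Finset.mem_product] at hx
      dsimp only at hx
      obtain ⟨hk, h1, h2⟩ := hx
      have hk' : k ≤ m := by have := Finset.mem_range.1 hk; omega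
      have hb1 := mem_bs.1 h1
      have hb2 := mem_bs.1 h2
      have hkg := kk_glue (m' := m) hb1 hb2
      dsimp only
      rw [hkg]
      exact congrArg (Sigma.mk k)
        (Prod.ext (filter1_glue hk' hb1 hb2) (filter2_glue hk' hb1 hb2))
  rw [key, Finset.card_sigma]
  exact Finset.sum_congr rfl fun k _ => Finset.card_product _ _

end BracketAux
namespace BracketAux

lemma card_bs_catalan : ∀ n, (bs 0 n).card = catalan n := by
  intro n
  induction n using Nat.strong_induction_on with
  | _ n ih =>
    match n with
    | 0 => rw [bs_zero]; simp
    | m + 1 =>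
      rw [card_bs_succ 0 m, catalan_succ',
        Finset.Nat.sum_antidiagonal_eq_sum_range_succ_mk]
      refine Finset.sum_congr rfl fun k hk => ?_
      have hk' : k < m + 1 := Finset.mem_range.1 hk
      rw [card_bs_shift (0 + 1) k, card_bs_shift (0 + 1 + k) (m - k),
        ih k (by omega), ih (m - k) (by omega)]

end BracketAux
/-- The number of bracket sets on `[n]` is the `n`-th Catalan number. -/
theorem card_bracket_sets (n : ℕ) :
    Nat.card {B : Finset (ℕ × ℕ) // IsBracketSetF n B} = catalan n := by
  have he : ∀ B : Finset (ℕ × ℕ), IsBracketSetF n B ↔ B ∈ BracketAux.bs 0 n := by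
    intro B
    rw [BracketAux.mem_bs]
    unfold IsBracketSetF BracketAux.IsBS
    simp
  rw [Nat.card_congr (Equiv.subtypeEquivRight he), Nat.card_eq_finsetCard,
    BracketAux.card_bs_catalan]
end

section
/- A vector (b_1,…,b_{n-1}) of nonnegative integers is the bracket vector of a bracket set on [n] if and only if 0 ≤ b_i ≤ n−i for all i, and for all i and all j with i < j ≤ i + b_i one has j + b_j ≤ i + b_i. -/
/-- A bracket set on `[n]`: a set of pairs `(i,j)` with `1 ≤ i < j ≤ n` whose
components are empty or intervals `{i+1,…,i+l}` (equivalently, downward closed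
above `i`), and such that `j ∈ B_i` implies `B_j ⊆ B_i` (transitivity). -/
def IsBracketSet (n : ℕ) (B : Set (ℕ × ℕ)) : Prop :=
  (∀ p ∈ B, 1 ≤ p.1 ∧ p.1 < p.2 ∧ p.2 ≤ n) ∧
  (∀ i l j : ℕ, (i, j) ∈ B → i < l → l < j → (i, l) ∈ B) ∧
  (∀ i j k : ℕ, (i, j) ∈ B → (j, k) ∈ B → (i, k) ∈ B)

lemma ioc_ncard (a m : ℕ) : (Set.Ioc a (a + m)).ncard = m := by
  rw [← Finset.coe_Ioc, Set.ncard_coe_finset, Nat.card_Ioc]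
  omega

lemma interval_of_dc (i m : ℕ) (S : Set ℕ) (hfin : S.Finite)
    (hsub : ∀ j ∈ S, i < j)
    (hdc : ∀ j ∈ S, ∀ l, i < l → l < j → l ∈ S)
    (hcard : S.ncard = m) : S = Set.Ioc i (i + m) := by
  have key : ∀ j ∈ S, Set.Ioc i j ⊆ S := by
    intro j hj l hl
    rcases eq_or_lt_of_le hl.2 with rfl | h
    · exact hj
    · exact hdc j hj l hl.1 h
  ext j
  constructor
  · intro hj
    have h1 : (Set.Ioc i j).ncard ≤ m := by
      rw [← hcard]
      exact Set.ncard_le_ncard (key j hj) hfin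
    have h2 : i < j := hsub j hj
    have : (Set.Ioc i j).ncard = j - i := by
      rw [← Finset.coe_Ioc, Set.ncard_coe_finset, Nat.card_Ioc]
    constructor
    · exact h2
    · omega
  · rintro ⟨h1, h2⟩
    by_contra hj
    have hS : S ⊆ Set.Ioo i j := by
      intro k hk
      refine ⟨hsub k hk, ?_⟩
      by_contra hkj
      push_neg at hkj
      exact hj (key k hk ⟨h1, hkj⟩)
    have := Set.ncard_le_ncard hS (Set.finite_Ioo i j)
    rw [hcard, ← Finset.coe_Ioo, Set.ncard_coe_finset, Nat.card_Ioo] at this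
    omega

/-- Characterization of bracket vectors: `(b_1,…,b_{n-1})` (with `b_i = 0`
outside `1 ≤ i < n`) is the bracket vector of a bracket set on `[n]` iff
`b_i ≤ n - i` for all `i` and `i < j ≤ i + b_i` implies `j + b_j ≤ i + b_i`. -/
theorem bracket_vector_characterization (n : ℕ) (b : ℕ → ℕ)
    (hb0 : ∀ i : ℕ, i = 0 ∨ n ≤ i → b i = 0) :
    (∃ B : Set (ℕ × ℕ), IsBracketSet n B ∧
        ∀ i : ℕ, {j : ℕ | (i, j) ∈ B}.ncard = b i) ↔
      ((∀ i : ℕ, 1 ≤ i → i < n → b i ≤ n - i) ∧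
        (∀ i j : ℕ, 1 ≤ i → i < n → i < j → j ≤ i + b i → j + b j ≤ i + b i)) := by
  constructor
  · rintro ⟨B, ⟨h1, h2, h3⟩, hcard⟩
    -- each component is an interval
    have hcomp : ∀ i : ℕ, {j : ℕ | (i, j) ∈ B} = Set.Ioc i (i + b i) := by
      intro i
      apply interval_of_dc i (b i) _ _ _ _ (hcard i)
      · apply Set.Finite.subset (Set.finite_Ioc i n)
        intro j hj
        obtain ⟨-, hij, hjn⟩ := h1 (i, j) hj
        exact ⟨hij, hjn⟩
      · intro j hj
        exact (h1 (i, j) hj).2.1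
      · intro j hj l hil hlj
        exact h2 i l j hj hil hlj
    have hmem : ∀ i j : ℕ, (i, j) ∈ B ↔ i < j ∧ j ≤ i + b i := by
      intro i j
      constructor
      · intro h; exact (Set.ext_iff.mp (hcomp i) j).mp h
      · intro h
        have : j ∈ Set.Ioc i (i + b i) := h
        rw [← hcomp i] at this; exact this
    constructor
    · intro i hi1 hin
      rcases Nat.eq_zero_or_pos (b i) with h | h
      · omega
      · have : (i, i + b i) ∈ B := (hmem i (i + b i)).2 ⟨by omega, le_refl _⟩
        have := (h1 _ this).2.2
        simp at this
        omega
    · intro i j hi1 hin hij hjb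
      rcases Nat.eq_zero_or_pos (b j) with h | h
      · omega
      · have hij' : (i, j) ∈ B := (hmem i j).2 ⟨hij, hjb⟩
        have hjk : (j, j + b j) ∈ B := (hmem j (j + b j)).2 ⟨by omega, le_refl _⟩
        have := h3 i j (j + b j) hij' hjk
        exact ((hmem i (j + b j)).1 this).2
  · rintro ⟨hA, hB⟩
    refine ⟨{p | 1 ≤ p.1 ∧ p.1 < p.2 ∧ p.2 ≤ p.1 + b p.1}, ⟨?_, ?_, ?_⟩, ?_⟩
    · rintro ⟨i, j⟩ ⟨hi1, hij, hjb⟩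
      refine ⟨hi1, hij, ?_⟩
      simp only at *
      by_cases hin : i < n
      · have := hA i hi1 hin; omega
      · have := hb0 i (Or.inr (by omega)); omega
    · rintro i l j ⟨hi1, hij, hjb⟩ hil hlj
      simp only at *
      exact ⟨hi1, hil, show l ≤ i + b i by omega⟩
    · rintro i j k ⟨hi1, hij, hjb⟩ ⟨hj1, hjk, hkb⟩
      refine ⟨hi1, by omega, ?_⟩
      simp only at *
      have hin : i < n := by
        by_contra h
        have := hb0 i (Or.inr (by omega)); omega
      have := hB i j hi1 hin hij hjb
      omega
    · intro i
      by_cases hi1 : 1 ≤ i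
      · have heq : {j : ℕ | (i, j) ∈ {p : ℕ × ℕ | 1 ≤ p.1 ∧ p.1 < p.2 ∧ p.2 ≤ p.1 + b p.1}}
            = Set.Ioc i (i + b i) := by
          ext j
          simp only [Set.mem_setOf_eq, Set.mem_Ioc]
          constructor
          · rintro ⟨-, h2, h3⟩; exact ⟨h2, h3⟩
          · rintro ⟨h2, h3⟩; exact ⟨hi1, h2, h3⟩
        rw [heq, ioc_ncard]
      · have hb : b i = 0 := hb0 i (Or.inl (by omega))
        have heq : {j : ℕ | (i, j) ∈ {p : ℕ × ℕ | 1 ≤ p.1 ∧ p.1 < p.2 ∧ p.2 ≤ p.1 + b p.1}}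
            = ∅ := by
          ext j; simp only [Set.mem_setOf_eq, Set.mem_empty_iff_false, iff_false]
          rintro ⟨h, -⟩; omega
        rw [heq, Set.ncard_empty, hb]
end
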